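/- Any string α over {0,1} that can be partitioned into finite blocks of length at most C each containing both letters 0 and 1 is quasi-isometric to (01)^ω (quasi-isometries exist in both directions). -/

import Mathlib

/-!
Let `b n` be the index of the block containing `n`. Since blocks have length between `1` and `C`,
`b` is a coarse bi-Lipschitz map `ℕ → ℕ`: `|b x - b y| ≤ |x - y| < C (|b x - b y| + 1)`.
Both quasi-isometries factor through block indices up to a bounded error: `n ↦ 2 b n + α n`
goes from `α` to `(01)^ω`, and `m ↦` (a position of the letter `m mod 2` in block `m / 2`)
goes back; the two are colour-preserving by construction, and the first is even a left
inverse of the second.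
-/

def IsQI {Γ : Type*} (α β : ℕ → Γ) (f : ℕ → ℕ) (A B : ℝ) : Prop :=
  1 ≤ A ∧ 0 ≤ B ∧ (∀ n, α n = β (f n)) ∧
  (∀ x y : ℕ, (1 / A) * |(x : ℝ) - (y : ℝ)| - B ≤ |(f x : ℝ) - (f y : ℝ)| ∧
      |(f x : ℝ) - (f y : ℝ)| ≤ A * |(x : ℝ) - (y : ℝ)| + B) ∧
  (∀ m : ℕ, ∃ x : ℕ, |(m : ℝ) - (f x : ℝ)| ≤ A)

/-- `α ≤_QI β`: there is a quasi-isometry from `α` to `β`. -/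
def QI {Γ : Type*} (α β : ℕ → Γ) : Prop := ∃ f A B, IsQI α β f A B

lemma Nat.cast_dist_eq_abs (x y : ℕ) : ((x.dist y : ℕ) : ℝ) = |(x : ℝ) - y| := by
  rcases le_total x y with h | h
  · rw [Nat.dist_eq_sub_of_le h, Nat.cast_sub h, abs_sub_comm,
      abs_of_nonneg (sub_nonneg.2 (Nat.cast_le.2 h))]
  · rw [Nat.dist_eq_sub_of_le_right h, Nat.cast_sub h,
      abs_of_nonneg (sub_nonneg.2 (Nat.cast_le.2 h))]

lemma isQI_of_natDist_le {Γ : Type*} {α β : ℕ → Γ} {f : ℕ → ℕ} {K : ℕ} (hK : 1 ≤ K)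
    (hcol : ∀ n, α n = β (f n))
    (hlower : ∀ x y, x.dist y ≤ K * (f x).dist (f y) + K)
    (hupper : ∀ x y, (f x).dist (f y) ≤ K * x.dist y + K)
    (hsurj : ∀ m : ℕ, ∃ x, m.dist (f x) ≤ K) :
    IsQI α β f K K := by
  have hKR : (1 : ℝ) ≤ K := by exact_mod_cast hK
  refine ⟨hKR, by positivity, hcol, fun x y => ⟨?_, ?_⟩, fun m => ?_⟩
  · have h : ((x.dist y : ℕ) : ℝ) ≤ K * ((f x).dist (f y) : ℕ) + K := by
      exact_mod_cast hlower x y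
    rw [Nat.cast_dist_eq_abs, Nat.cast_dist_eq_abs] at h
    rw [sub_le_iff_le_add, div_mul_eq_mul_div, one_mul, div_le_iff₀ (by positivity)]
    nlinarith [abs_nonneg ((f x : ℝ) - f y)]
  · have h : (((f x).dist (f y) : ℕ) : ℝ) ≤ K * (x.dist y : ℕ) + K := by
      exact_mod_cast hupper x y
    rwa [Nat.cast_dist_eq_abs, Nat.cast_dist_eq_abs] at h
  · obtain ⟨x, hx⟩ := hsurj m
    refine ⟨x, ?_⟩
    rw [← Nat.cast_dist_eq_abs]
    exact_mod_cast hx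

/-- For `k` strictly increasing with `k 0 = 0`, the index `i` of the block `[k i, k (i + 1))`
containing `n`. -/
def blockIndex (k : ℕ → ℕ) (n : ℕ) : ℕ := Nat.findGreatest (fun i => k i ≤ n) n

section Blocks

variable {k : ℕ → ℕ} {C : ℕ}

lemma apply_blockIndex_le (hk0 : k 0 = 0) (n : ℕ) : k (blockIndex k n) ≤ n :=
  Nat.findGreatest_spec (P := fun i => k i ≤ n) (Nat.zero_le n) (by simp [hk0])

lemma lt_apply_blockIndex_succ (hk : StrictMono k) (n : ℕ) : n < k (blockIndex k n + 1) := by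
  by_contra! h
  by_cases hn : blockIndex k n + 1 ≤ n
  · exact Nat.findGreatest_is_greatest (Nat.lt_succ_self _) hn h
  · have := hk.le_apply (x := blockIndex k n + 1)
    omega

lemma blockIndex_eq (hk0 : k 0 = 0) (hk : StrictMono k) {i n : ℕ} (hi : k i ≤ n)
    (hn : n < k (i + 1)) : blockIndex k n = i := by
  have h₁ := hk.lt_iff_lt.1 ((apply_blockIndex_le hk0 n).trans_lt hn)
  have h₂ := hk.lt_iff_lt.1 (hi.trans_lt (lt_apply_blockIndex_succ hk n))
  omega

lemma blockIndex_mono (hk0 : k 0 = 0) (hk : StrictMono k) : Monotone (blockIndex k) := by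
  intro y x hyx
  have := hk.lt_iff_lt.1
    ((apply_blockIndex_le hk0 y).trans_lt (hyx.trans_lt (lt_apply_blockIndex_succ hk x)))
  omega

lemma dist_blockIndex_le (hk0 : k 0 = 0) (hk : StrictMono k) (x y : ℕ) :
    (blockIndex k x).dist (blockIndex k y) ≤ x.dist y := by
  wlog hyx : y ≤ x generalizing x y
  · rw [Nat.dist_comm, Nat.dist_comm x]
    exact this y x (by omega)
  have hb := blockIndex_mono hk0 hk hyx
  rw [Nat.dist_eq_sub_of_le_right hb, Nat.dist_eq_sub_of_le_right hyx]
  rcases hb.eq_or_lt with h | h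
  · omega
  · have hgap := hk.add_le_nat (blockIndex k x - (blockIndex k y + 1)) (blockIndex k y + 1)
    rw [Nat.sub_add_cancel h] at hgap
    have := apply_blockIndex_le hk0 x
    have := lt_apply_blockIndex_succ hk y
    omega

lemma apply_add_le_of_sub_le (hC : ∀ i, k (i + 1) - k i ≤ C) (i j : ℕ) :
    k (i + j) ≤ k i + j * C := by
  induction j with
  | zero => simp
  | succ j ih =>
    have := hC (i + j)
    rw [← add_assoc, add_mul, one_mul]
    omega

lemma dist_lt_mul_dist_blockIndex_add_one (hk0 : k 0 = 0) (hk : StrictMono k)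
    (hC : ∀ i, k (i + 1) - k i ≤ C) (x y : ℕ) :
    x.dist y < C * ((blockIndex k x).dist (blockIndex k y) + 1) := by
  wlog hyx : y ≤ x generalizing x y
  · rw [Nat.dist_comm, Nat.dist_comm (blockIndex k x)]
    exact this y x (by omega)
  have hb := blockIndex_mono hk0 hk hyx
  rw [Nat.dist_eq_sub_of_le_right hb, Nat.dist_eq_sub_of_le_right hyx]
  have hlen := apply_add_le_of_sub_le hC (blockIndex k y) (blockIndex k x - blockIndex k y + 1)
  rw [show blockIndex k y + (blockIndex k x - blockIndex k y + 1) = blockIndex k x + 1 by omega]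
    at hlen
  have := lt_apply_blockIndex_succ hk x
  have := apply_blockIndex_le hk0 y
  rw [mul_comm]
  omega

end Blocks

/-- The word `(01)^ω`. -/
def zeroOne (n : ℕ) : Fin 2 := if n % 2 = 0 then 0 else 1

lemma zeroOne_two_mul_add (i : ℕ) (c : Fin 2) : zeroOne (2 * i + c) = c := by
  fin_cases c <;> simp [zeroOne, Nat.add_mod]

lemma two_mul_div_two_add_zeroOne (m : ℕ) : 2 * (m / 2) + (zeroOne m : ℕ) = m := by
  unfold zeroOne
  split_ifs <;> simp only [Fin.val_zero, Fin.val_one] <;> omega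

section Coding

variable {α : ℕ → Fin 2} {k : ℕ → ℕ} {C : ℕ}

lemma isQI_two_mul_blockIndex_add (hk0 : k 0 = 0) (hk : StrictMono k)
    (hC : ∀ i, k (i + 1) - k i ≤ C) (hC2 : 2 ≤ C)
    (hboth : ∀ i (c : Fin 2), ∃ j, k i ≤ j ∧ j < k (i + 1) ∧ α j = c) :
    IsQI α zeroOne (fun n => 2 * blockIndex k n + α n) C C := by
  have hα : ∀ n, (α n : ℕ) ≤ 1 := fun n => Nat.lt_succ_iff.1 (α n).isLt
  apply isQI_of_natDist_le (by omega)
  · intro n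
    rw [zeroOne_two_mul_add]
  · intro x y
    have hb : (blockIndex k x).dist (blockIndex k y) ≤
        (2 * blockIndex k x + α x).dist (2 * blockIndex k y + α y) := by
      have := hα x; have := hα y
      unfold Nat.dist
      omega
    calc x.dist y ≤ C * ((blockIndex k x).dist (blockIndex k y) + 1) :=
          (dist_lt_mul_dist_blockIndex_add_one hk0 hk hC x y).le
      _ ≤ C * ((2 * blockIndex k x + α x).dist (2 * blockIndex k y + α y) + 1) := by gcongr
      _ = _ := by ring
  · intro x y
    have hb := dist_blockIndex_le hk0 hk x y
    have : (2 * blockIndex k x + α x).dist (2 * blockIndex k y + α y) ≤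
        2 * (blockIndex k x).dist (blockIndex k y) + 1 := by
      have := hα x; have := hα y
      unfold Nat.dist
      omega
    nlinarith
  · intro m
    obtain ⟨j, hj, hj', hjc⟩ := hboth (m / 2) (zeroOne m)
    refine ⟨j, ?_⟩
    rw [blockIndex_eq hk0 hk hj hj', hjc, two_mul_div_two_add_zeroOne, Nat.dist_self]
    omega

lemma isQI_blockRepresentative (hk0 : k 0 = 0) (hk : StrictMono k)
    (hC : ∀ i, k (i + 1) - k i ≤ C) (hC2 : 2 ≤ C) {r : ℕ → Fin 2 → ℕ}
    (hr : ∀ i c, k i ≤ r i c ∧ r i c < k (i + 1) ∧ α (r i c) = c) :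
    IsQI zeroOne α (fun m => r (m / 2) (zeroOne m)) C C := by
  have hb : ∀ m, blockIndex k (r (m / 2) (zeroOne m)) = m / 2 :=
    fun m => blockIndex_eq hk0 hk (hr _ _).1 (hr _ _).2.1
  apply isQI_of_natDist_le (by omega)
  · intro m
    exact (hr _ _).2.2.symm
  · intro m n
    have hdist := dist_blockIndex_le hk0 hk (r (m / 2) (zeroOne m)) (r (n / 2) (zeroOne n))
    rw [hb, hb] at hdist
    have : m.dist n ≤ 2 * (m / 2).dist (n / 2) + 1 := by
      unfold Nat.dist
      omega
    nlinarith
  · intro m n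
    have hdist := dist_lt_mul_dist_blockIndex_add_one hk0 hk hC
      (r (m / 2) (zeroOne m)) (r (n / 2) (zeroOne n))
    rw [hb, hb] at hdist
    have : (m / 2).dist (n / 2) ≤ m.dist n := by
      unfold Nat.dist
      omega
    calc _ ≤ C * ((m / 2).dist (n / 2) + 1) := hdist.le
      _ ≤ C * (m.dist n + 1) := by gcongr
      _ = _ := by ring
  · intro m
    refine ⟨2 * blockIndex k m, ?_⟩
    have hdist := dist_lt_mul_dist_blockIndex_add_one hk0 hk hC m
      (r (2 * blockIndex k m / 2) (zeroOne (2 * blockIndex k m)))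
    rw [hb, Nat.dist_eq_zero (Nat.mul_div_cancel_left _ two_pos).symm, zero_add, mul_one] at hdist
    exact hdist.le

end Coding

theorem blocks_both_letters_QI_zeroOne (α : ℕ → Fin 2) (C : ℕ) (k : ℕ → ℕ)
    (hk0 : k 0 = 0) (hmono : StrictMono k) (hC : ∀ i, k (i + 1) - k i ≤ C)
    (hboth : ∀ i, (∃ j, k i ≤ j ∧ j < k (i + 1) ∧ α j = 0) ∧
                  (∃ j, k i ≤ j ∧ j < k (i + 1) ∧ α j = 1)) :
    QI α (fun i => if i % 2 = 0 then (0 : Fin 2) else 1) ∧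
    QI (fun i => if i % 2 = 0 then (0 : Fin 2) else 1) α := by
  have hletter : ∀ i (c : Fin 2), ∃ j, k i ≤ j ∧ j < k (i + 1) ∧ α j = c := by
    intro i c
    fin_cases c
    exacts [(hboth i).1, (hboth i).2]
  choose r hr using hletter
  have hC2 : 2 ≤ C := by
    have h₀ := hr 0 0
    have h₁ := hr 0 1
    have hne : r 0 0 ≠ r 0 1 := fun h => by simp [h, h₁.2.2] at h₀
    have := hC 0
    omega
  exact ⟨⟨_, _, _, isQI_two_mul_blockIndex_add hk0 hmono hC hC2 fun i c => ⟨r i c, hr i c⟩⟩,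
    ⟨_, _, _, isQI_blockRepresentative hk0 hmono hC hC2 hr⟩⟩
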